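/- arXiv:2208.14682 — 2 statements merged into one kernel-verified Lean document; each statement's English description precedes it below -/
import Mathlib

section
/- Suppose the score function f(x) = max(η(x), 1−η(x)) satisfies f(x) ≥ 1/2 for all x and the real random variable f(X) admits a density bounded by C > 0. Let η̂ : X → [0,1] be measurable, let f̂(x) = max(η̂(x), 1−η̂(x)), and let δ ≥ 0 satisfy |η̂(x) − η(x)| ≤ δ for all x ∈ X. Then for every t ∈ (1/2, 1), P(f̂(X) ≤ t) ≤ 2Cδ + C(t − 1/2). -/
open MeasureTheory

/-- Suppose the score function `f(x) = max(η(x), 1−η(x))`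
satisfies `f(x) ≥ 1/2` for all `x` and the real random variable `f(X)` admits a
density bounded by `C > 0`. Let `η̂ : 𝒳 → [0,1]` be measurable, let
`f̂(x) = max(η̂(x), 1−η̂(x))`, and let `δ ≥ 0` satisfy `|η̂(x) − η(x)| ≤ δ` for
all `x`. Then for every `t ∈ (1/2, 1)`, `P(f̂(X) ≤ t) ≤ 2Cδ + C(t − 1/2)`. -/
theorem estimated_score_cdf_bound
    {Ω : Type*} [MeasurableSpace Ω] {μ : Measure Ω} [IsProbabilityMeasure μ]
    {𝒳 : Type*} [MeasurableSpace 𝒳]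
    (X : Ω → 𝒳) (hX : Measurable X)
    (η : 𝒳 → ℝ) (hη : Measurable η) (hη01 : ∀ x, η x ∈ Set.Icc (0 : ℝ) 1)
    (hf_half : ∀ x, (1 : ℝ)/2 ≤ max (η x) (1 - η x))
    (C : ℝ) (hC : 0 < C)
    (hdens : ∃ p : ℝ → ENNReal, (∀ t, p t ≤ ENNReal.ofReal C) ∧
      Measure.map (fun ω => max (η (X ω)) (1 - η (X ω))) μ = volume.withDensity p)
    (ηhat : 𝒳 → ℝ) (hηhat : Measurable ηhat)
    (hηhat01 : ∀ x, ηhat x ∈ Set.Icc (0 : ℝ) 1)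
    (δ : ℝ) (hδ : 0 ≤ δ) (hclose : ∀ x, |ηhat x - η x| ≤ δ) :
    ∀ t : ℝ, t ∈ Set.Ioo (1/2 : ℝ) 1 →
      (μ {ω | max (ηhat (X ω)) (1 - ηhat (X ω)) ≤ t}).toReal
        ≤ 2 * C * δ + C * (t - 1/2) := by
  intro t ht
  obtain ⟨p, hp, hmap⟩ := hdens
  set f : Ω → ℝ := fun ω => max (η (X ω)) (1 - η (X ω)) with hf
  have hfm : Measurable f := ((hη.comp hX).max (measurable_const.sub (hη.comp hX)))
  -- subset
  have hsub : {ω | max (ηhat (X ω)) (1 - ηhat (X ω)) ≤ t} ⊆ {ω | f ω ∈ Set.Icc (1/2 : ℝ) (t + δ)} := by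
    intro ω hω
    simp only [Set.mem_setOf_eq] at hω ⊢
    constructor
    · exact hf_half _
    · have h1 : |f ω - max (ηhat (X ω)) (1 - ηhat (X ω))| ≤ δ := by
        refine le_trans (abs_max_sub_max_le_max _ _ _ _) ?_
        have h2 : (1 - η (X ω)) - (1 - ηhat (X ω)) = ηhat (X ω) - η (X ω) := by ring
        rw [h2]
        have := hclose (X ω)
        have h3 : |η (X ω) - ηhat (X ω)| = |ηhat (X ω) - η (X ω)| := abs_sub_comm _ _
        rw [h3]
        simp [this]
      have := abs_le.mp h1
      linarith [this.2]
  have hIcc : MeasurableSet (Set.Icc (1/2 : ℝ) (t + δ)) := measurableSet_Icc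
  have key : μ {ω | max (ηhat (X ω)) (1 - ηhat (X ω)) ≤ t}
      ≤ ENNReal.ofReal (C * (t + δ - 1/2)) := by
    calc μ {ω | max (ηhat (X ω)) (1 - ηhat (X ω)) ≤ t}
        ≤ μ (f ⁻¹' Set.Icc (1/2 : ℝ) (t + δ)) := measure_mono hsub
      _ = (Measure.map f μ) (Set.Icc (1/2 : ℝ) (t + δ)) := (Measure.map_apply hfm hIcc).symm
      _ = ∫⁻ s in Set.Icc (1/2 : ℝ) (t + δ), p s := by rw [hmap, withDensity_apply _ hIcc]
      _ ≤ ∫⁻ _ in Set.Icc (1/2 : ℝ) (t + δ), ENNReal.ofReal C :=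
          setLIntegral_mono measurable_const (fun s _ => hp s)
      _ = ENNReal.ofReal C * volume (Set.Icc (1/2 : ℝ) (t + δ)) := by
          rw [setLIntegral_const]
      _ = ENNReal.ofReal (C * (t + δ - 1/2)) := by
          rw [Real.volume_Icc, ← ENNReal.ofReal_mul hC.le]
  have h1 : (μ {ω | max (ηhat (X ω)) (1 - ηhat (X ω)) ≤ t}).toReal
      ≤ C * (t + δ - 1/2) := by
    refine le_trans (ENNReal.toReal_mono ENNReal.ofReal_ne_top key) ?_
    rw [ENNReal.toReal_ofReal]
    nlinarith [ht.1, hδ]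
  nlinarith [ht.1]
end

section
/- Suppose the score function f(x) = max(η(x), 1−η(x)) satisfies f(x) ≥ 1/2 for all x and the random variable f(X) admits a density bounded by C > 0. Let A ⊆ X be measurable, let η̂ : X → [0,1] be measurable with sup_{x ∈ A} |η̂(x) − η(x)| ≤ ρ for some ρ ≥ 0, and let ĝ : X → {0,1} be a measurable classifier such that ĝ(x) = g*(x) for all x ∉ A and ĝ(x) = 1{η̂(x) ≥ 1/2} for all x ∈ A. Then R(ĝ) − R(g*) ≤ 4·C·ρ². -/
/-!
A label `k` errs with conditional probability `η(X)` if `k = 0` and `1 - η(X)` if `k = 1`, so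
each risk is the expectation of this pointwise risk. The plug-in label differs from the Bayes
label only where `η̂` and `η` lie on opposite sides of `1/2`; since `|η̂ - η| ≤ ρ`, there
`f(X) ∈ [1/2, 1/2 + ρ]` and the excess pointwise risk `|2η - 1|` is at most `2ρ`. The density
bound gives that event probability at most `Cρ`, so the excess risk is at most `2Cρ² ≤ 4Cρ²`.
-/

open MeasureTheory

/-- The conditional probability that predicting the label `k` is wrong when `P(Y = 1 | X) = q`;
a label outside `{0, 1}` is always wrong. -/
def pointwiseRisk (k : ℕ) (q : ℝ) : ℝ :=
  q * (if k = 1 then 0 else 1) + (1 - q) * (if k = 0 then 0 else 1)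

@[simp] lemma pointwiseRisk_zero (q : ℝ) : pointwiseRisk 0 q = q := by simp [pointwiseRisk]

@[simp] lemma pointwiseRisk_one (q : ℝ) : pointwiseRisk 1 q = 1 - q := by simp [pointwiseRisk]

lemma pointwiseRisk_eq_add_mul (k : ℕ) (q : ℝ) :
    pointwiseRisk k q = pointwiseRisk k 0 + q * (pointwiseRisk k 1 - pointwiseRisk k 0) := by
  unfold pointwiseRisk; ring

lemma pointwiseRisk_mem_Icc (k : ℕ) {q : ℝ} (hq : q ∈ Set.Icc (0 : ℝ) 1) :
    pointwiseRisk k q ∈ Set.Icc (0 : ℝ) 1 := by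
  obtain ⟨hq0, hq1⟩ := hq
  unfold pointwiseRisk
  constructor <;> split_ifs <;> linarith

lemma abs_pointwiseRisk_one_sub_pointwiseRisk_zero_le (k : ℕ) :
    |pointwiseRisk k 1 - pointwiseRisk k 0| ≤ 1 := by
  have h1 := pointwiseRisk_mem_Icc k (q := 1) (by simp)
  have h0 := pointwiseRisk_mem_Icc k (q := 0) (by simp)
  rw [abs_le]
  constructor <;> linarith [h1.1, h1.2, h0.1, h0.2]

lemma indicator_ne_eq_pointwiseRisk {k y : ℕ} (hy : y = 0 ∨ y = 1) :
    (if k ≠ y then (1 : ℝ) else 0) = pointwiseRisk k (if y = 1 then 1 else 0) := by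
  unfold pointwiseRisk
  rcases hy with rfl | rfl <;> by_cases hk0 : k = 0 <;> by_cases hk1 : k = 1 <;> simp_all

lemma pointwiseRisk_plugin_sub_bayes_le {q qhat ρ : ℝ} (hρ : 0 ≤ ρ) (hclose : |qhat - q| ≤ ρ) :
    pointwiseRisk (if qhat ≥ 1/2 then 1 else 0) q - pointwiseRisk (if q ≥ 1/2 then 1 else 0) q
      ≤ 2 * ρ * (Set.Icc (1/2) (1/2 + ρ)).indicator 1 (max q (1 - q)) := by
  have hind : 0 ≤ 2 * ρ * (Set.Icc (1/2) (1/2 + ρ)).indicator 1 (max q (1 - q)) :=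
    mul_nonneg (by positivity) (Set.indicator_nonneg (fun _ _ => zero_le_one) _)
  rw [abs_le] at hclose
  by_cases hqhat : qhat ≥ 1/2 <;> by_cases hq : q ≥ 1/2
  · rwa [if_pos hqhat, if_pos hq, sub_self]
  · have hmem : max q (1 - q) ∈ Set.Icc (1/2 : ℝ) (1/2 + ρ) :=
      ⟨le_max_of_le_right (by linarith), max_le (by linarith) (by linarith)⟩
    simp only [hqhat, hq, if_true, if_false, pointwiseRisk_zero, pointwiseRisk_one,
      Set.indicator_of_mem hmem, Pi.one_apply]
    linarith
  · have hmem : max q (1 - q) ∈ Set.Icc (1/2 : ℝ) (1/2 + ρ) :=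
      ⟨le_max_of_le_left hq, max_le (by linarith) (by linarith)⟩
    simp only [hqhat, hq, if_true, if_false, pointwiseRisk_zero, pointwiseRisk_one,
      Set.indicator_of_mem hmem, Pi.one_apply]
    linarith
  · rwa [if_neg hqhat, if_neg hq, sub_self]

lemma pointwiseRisk_sub_bayes_le_of_eq_plugin_on {𝒳 : Type*} {A : Set 𝒳} {η ηhat : 𝒳 → ℝ}
    {ρ : ℝ} (hρ : 0 ≤ ρ) (hclose : ∀ x ∈ A, |ηhat x - η x| ≤ ρ) {ghat : 𝒳 → ℕ}
    (hout : ∀ x ∉ A, ghat x = if η x ≥ 1/2 then 1 else 0)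
    (hin : ∀ x ∈ A, ghat x = if ηhat x ≥ 1/2 then 1 else 0) (x : 𝒳) :
    pointwiseRisk (ghat x) (η x) - pointwiseRisk (if η x ≥ 1/2 then 1 else 0) (η x)
      ≤ 2 * ρ * (Set.Icc (1/2) (1/2 + ρ)).indicator 1 (max (η x) (1 - η x)) := by
  by_cases hx : x ∈ A
  · rw [hin x hx]
    exact pointwiseRisk_plugin_sub_bayes_le hρ (hclose x hx)
  · rw [hout x hx, sub_self]
    exact mul_nonneg (by positivity) (Set.indicator_nonneg (fun _ _ => zero_le_one) _)

section Measure

variable {Ω 𝒳 : Type*} [MeasurableSpace Ω] [MeasurableSpace 𝒳] {μ : Measure Ω}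

lemma measurable_pointwiseRisk_comp {K : Ω → ℕ} {Q : Ω → ℝ} (hK : Measurable K)
    (hQ : Measurable Q) : Measurable fun ω => pointwiseRisk (K ω) (Q ω) := by
  have h1 : Measurable fun ω => if K ω = 1 then (0 : ℝ) else 1 :=
    Measurable.ite (hK (measurableSet_singleton 1)) measurable_const measurable_const
  have h0 : Measurable fun ω => if K ω = 0 then (0 : ℝ) else 1 :=
    Measurable.ite (hK (measurableSet_singleton 0)) measurable_const measurable_const
  unfold pointwiseRisk
  fun_prop

lemma integrable_pointwiseRisk_comp [IsFiniteMeasure μ] {K : Ω → ℕ} {Q : Ω → ℝ}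
    (hK : Measurable K) (hQ : Measurable Q) (hQ01 : ∀ ω, Q ω ∈ Set.Icc (0 : ℝ) 1) :
    Integrable (fun ω => pointwiseRisk (K ω) (Q ω)) μ :=
  .of_mem_Icc 0 1 (measurable_pointwiseRisk_comp hK hQ).aemeasurable
    (.of_forall fun ω => pointwiseRisk_mem_Icc _ (hQ01 ω))

lemma integral_mul_comp_eq_of_condExp_eq [IsFiniteMeasure μ] {X : Ω → 𝒳} (hX : Measurable X)
    {Z : Ω → ℝ} (hZ : Integrable Z μ) {η : 𝒳 → ℝ}
    (hcond : μ[Z | MeasurableSpace.comap X inferInstance] =ᵐ[μ] fun ω => η (X ω))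
    {φ : 𝒳 → ℝ} (hφ : Measurable φ) {c : ℝ} (hφc : ∀ x, ‖φ x‖ ≤ c) :
    ∫ ω, Z ω * φ (X ω) ∂μ = ∫ ω, η (X ω) * φ (X ω) ∂μ := by
  have hφX : StronglyMeasurable[MeasurableSpace.comap X inferInstance] fun ω => φ (X ω) :=
    (hφ.comp (comap_measurable X)).stronglyMeasurable
  have hint : Integrable (Z * fun ω => φ (X ω)) μ :=
    hZ.mul_bdd (hφ.comp hX).aestronglyMeasurable (.of_forall fun ω => hφc (X ω))
  calc ∫ ω, Z ω * φ (X ω) ∂μ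
      = ∫ ω, (μ[Z * fun ω => φ (X ω) | MeasurableSpace.comap X inferInstance]) ω ∂μ :=
        (integral_condExp hX.comap_le).symm
    _ = ∫ ω, η (X ω) * φ (X ω) ∂μ :=
        integral_congr_ae ((condExp_mul_of_stronglyMeasurable_right hφX hint hZ).trans
          (hcond.mul .rfl))

/-- Since `pointwiseRisk k q` is affine in `q`, the pull-out property lets `η(X)` replace `Z`. -/
lemma integral_pointwiseRisk_comp_eq_of_condExp_eq [IsFiniteMeasure μ] {X : Ω → 𝒳}
    (hX : Measurable X) {Z : Ω → ℝ} (hZ : Measurable Z) (hZ01 : ∀ ω, Z ω ∈ Set.Icc (0 : ℝ) 1)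
    {η : 𝒳 → ℝ} (hη : Measurable η) (hη01 : ∀ x, η x ∈ Set.Icc (0 : ℝ) 1)
    (hcond : μ[Z | MeasurableSpace.comap X inferInstance] =ᵐ[μ] fun ω => η (X ω))
    {g : 𝒳 → ℕ} (hg : Measurable g) :
    ∫ ω, pointwiseRisk (g (X ω)) (Z ω) ∂μ = ∫ ω, pointwiseRisk (g (X ω)) (η (X ω)) ∂μ := by
  set φ : 𝒳 → ℝ := fun x => pointwiseRisk (g x) 1 - pointwiseRisk (g x) 0
  have hφ : Measurable φ :=
    (measurable_pointwiseRisk_comp hg measurable_const).sub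
      (measurable_pointwiseRisk_comp hg measurable_const)
  have hφ1 (x : 𝒳) : ‖φ x‖ ≤ 1 := abs_pointwiseRisk_one_sub_pointwiseRisk_zero_le (g x)
  have hint0 : Integrable (fun ω => pointwiseRisk (g (X ω)) 0) μ :=
    integrable_pointwiseRisk_comp (hg.comp hX) measurable_const fun _ => by simp
  have hint_mul {Q : Ω → ℝ} (hQ : Measurable Q) (hQ01 : ∀ ω, Q ω ∈ Set.Icc (0 : ℝ) 1) :
      Integrable (fun ω => Q ω * φ (X ω)) μ :=
    (Integrable.of_mem_Icc 0 1 hQ.aemeasurable (.of_forall hQ01)).mul_bdd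
      (hφ.comp hX).aestronglyMeasurable (.of_forall fun ω => hφ1 (X ω))
  have hsplit (Q : Ω → ℝ) : ∫ ω, pointwiseRisk (g (X ω)) (Q ω) ∂μ
      = ∫ ω, pointwiseRisk (g (X ω)) 0 + Q ω * φ (X ω) ∂μ :=
    integral_congr_ae (.of_forall fun ω => pointwiseRisk_eq_add_mul _ _)
  rw [hsplit Z, hsplit fun ω => η (X ω), integral_add hint0 (hint_mul hZ hZ01),
    integral_add hint0 (hint_mul (Q := fun ω => η (X ω)) (hη.comp hX) fun ω => hη01 (X ω)),
    integral_mul_comp_eq_of_condExp_eq hX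
      (.of_mem_Icc 0 1 hZ.aemeasurable (.of_forall hZ01)) hcond hφ hφ1]

lemma measureReal_ne_eq_integral_pointwiseRisk [IsFiniteMeasure μ] {X : Ω → 𝒳} {Y : Ω → ℕ}
    (hX : Measurable X) (hY : Measurable Y) (hYrange : ∀ ω, Y ω = 0 ∨ Y ω = 1)
    {η : 𝒳 → ℝ} (hη : Measurable η) (hη01 : ∀ x, η x ∈ Set.Icc (0 : ℝ) 1)
    (hreg : μ[(fun ω => if Y ω = 1 then (1 : ℝ) else 0) |
        MeasurableSpace.comap X inferInstance] =ᵐ[μ] fun ω => η (X ω))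
    {g : 𝒳 → ℕ} (hg : Measurable g) :
    μ.real {ω | g (X ω) ≠ Y ω} = ∫ ω, pointwiseRisk (g (X ω)) (η (X ω)) ∂μ := by
  have hZ : Measurable fun ω => if Y ω = 1 then (1 : ℝ) else 0 :=
    Measurable.ite (hY (measurableSet_singleton 1)) measurable_const measurable_const
  have hZ01 (ω : Ω) : (if Y ω = 1 then (1 : ℝ) else 0) ∈ Set.Icc (0 : ℝ) 1 := by
    split_ifs <;> norm_num
  have hE : MeasurableSet {ω | g (X ω) ≠ Y ω} := (measurableSet_eq_fun (hg.comp hX) hY).compl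
  rw [← integral_pointwiseRisk_comp_eq_of_condExp_eq hX hZ hZ01 hη hη01 hreg hg,
    ← integral_indicator_one hE]
  congr 1 with ω
  rw [← indicator_ne_eq_pointwiseRisk (hYrange ω)]
  simp [Set.indicator]

lemma measureReal_preimage_Icc_le_of_map_eq_withDensity {F : Ω → ℝ} (hF : Measurable F)
    {p : ℝ → ENNReal} {C : ℝ} (hC : 0 ≤ C) (hp : ∀ t, p t ≤ ENNReal.ofReal C)
    (hmap : μ.map F = volume.withDensity p) {a b : ℝ} (hab : a ≤ b) :
    μ.real (F ⁻¹' Set.Icc a b) ≤ C * (b - a) := by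
  refine ENNReal.toReal_le_of_le_ofReal (mul_nonneg hC (sub_nonneg.2 hab)) ?_
  rw [← Measure.map_apply hF measurableSet_Icc, hmap]
  calc volume.withDensity p (Set.Icc a b)
      ≤ volume.withDensity (fun _ => ENNReal.ofReal C) (Set.Icc a b) :=
        withDensity_mono (.of_forall hp) _
    _ = ENNReal.ofReal (C * (b - a)) := by
        rw [withDensity_const, Measure.smul_apply, smul_eq_mul, Real.volume_Icc,
          ENNReal.ofReal_mul hC]

end Measure

theorem excess_risk_bound_of_plugin_on_uncertain_region_general
    {Ω : Type*} [MeasurableSpace Ω] {μ : Measure Ω} [IsProbabilityMeasure μ]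
    {𝒳 : Type*} [MeasurableSpace 𝒳]
    (X : Ω → 𝒳) (Y : Ω → ℕ) (hX : Measurable X) (hY : Measurable Y)
    (hYrange : ∀ ω, Y ω = 0 ∨ Y ω = 1)
    (η : 𝒳 → ℝ) (hη : Measurable η) (hη01 : ∀ x, η x ∈ Set.Icc (0 : ℝ) 1)
    (hreg : μ[(fun ω => if Y ω = 1 then (1 : ℝ) else 0) |
        MeasurableSpace.comap X inferInstance] =ᵐ[μ] fun ω => η (X ω))
    (C : ℝ) (hC : 0 < C)
    (hdens : ∃ p : ℝ → ENNReal, (∀ t, p t ≤ ENNReal.ofReal C) ∧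
      Measure.map (fun ω => max (η (X ω)) (1 - η (X ω))) μ = volume.withDensity p)
    (A : Set 𝒳)
    (ηhat : 𝒳 → ℝ)
    (ρ : ℝ) (hρ : 0 ≤ ρ) (hclose : ∀ x ∈ A, |ηhat x - η x| ≤ ρ)
    (ghat : 𝒳 → ℕ) (hghat : Measurable ghat)
    (hout : ∀ x ∉ A, ghat x = if η x ≥ 1/2 then 1 else 0)
    (hin : ∀ x ∈ A, ghat x = if ηhat x ≥ 1/2 then 1 else 0) :
    (μ {ω | ghat (X ω) ≠ Y ω}).toReal
        - (μ {ω | (if η (X ω) ≥ 1/2 then (1 : ℕ) else 0) ≠ Y ω}).toReal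
      ≤ 4 * C * ρ ^ 2 := by
  obtain ⟨p, hp, hmap⟩ := hdens
  set gstar : 𝒳 → ℕ := fun x => if η x ≥ 1/2 then 1 else 0
  set F : Ω → ℝ := fun ω => max (η (X ω)) (1 - η (X ω))
  have hF : Measurable F := by fun_prop
  have hI : MeasurableSet (F ⁻¹' Set.Icc (1/2) (1/2 + ρ)) := hF measurableSet_Icc
  have hgstar : Measurable gstar :=
    Measurable.ite (measurableSet_le measurable_const hη) measurable_const measurable_const
  have hrisk {g : 𝒳 → ℕ} (hg : Measurable g) :=
    measureReal_ne_eq_integral_pointwiseRisk hX hY hYrange hη hη01 hreg hg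
  have hint {g : 𝒳 → ℕ} (hg : Measurable g) :
      Integrable (fun ω => pointwiseRisk (g (X ω)) (η (X ω))) μ :=
    integrable_pointwiseRisk_comp (hg.comp hX) (hη.comp hX) fun ω => hη01 (X ω)
  have hsmall : μ.real (F ⁻¹' Set.Icc (1/2) (1/2 + ρ)) ≤ C * ρ := by
    simpa using measureReal_preimage_Icc_le_of_map_eq_withDensity hF hC.le hp hmap
      (by linarith : (1/2 : ℝ) ≤ 1/2 + ρ)
  calc (μ {ω | ghat (X ω) ≠ Y ω}).toReal - (μ {ω | gstar (X ω) ≠ Y ω}).toReal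
      = ∫ ω, pointwiseRisk (ghat (X ω)) (η (X ω)) - pointwiseRisk (gstar (X ω)) (η (X ω)) ∂μ := by
        rw [← measureReal_def, ← measureReal_def, hrisk hghat, hrisk hgstar,
          ← integral_sub (hint hghat) (hint hgstar)]
    _ ≤ ∫ ω, 2 * ρ * (F ⁻¹' Set.Icc (1/2) (1/2 + ρ)).indicator 1 ω ∂μ :=
        integral_mono ((hint hghat).sub (hint hgstar))
          (((integrable_const 1).indicator hI).const_mul _)
          fun ω => pointwiseRisk_sub_bayes_le_of_eq_plugin_on hρ hclose hout hin (X ω)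
    _ = 2 * ρ * μ.real (F ⁻¹' Set.Icc (1/2) (1/2 + ρ)) := by
        rw [integral_const_mul, integral_indicator_one hI]
    _ ≤ 4 * C * ρ ^ 2 := by nlinarith

/-- Suppose the score function `f(x) = max(η(x), 1−η(x))`
satisfies `f(x) ≥ 1/2` for all `x` and `f(X)` admits a density bounded by
`C > 0`.  Let `A` be measurable, let `η̂ : 𝒳 → [0,1]` be measurable with
`sup_{x ∈ A} |η̂(x) − η(x)| ≤ ρ` for some `ρ ≥ 0`, and let `ĝ` be a measurable
classifier with `ĝ(x) = g*(x)` off `A` and `ĝ(x) = 1{η̂(x) ≥ 1/2}` on `A`.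
Then `R(ĝ) − R(g*) ≤ 4·C·ρ²`. -/
theorem excess_risk_bound_of_plugin_on_uncertain_region
    {Ω : Type*} [MeasurableSpace Ω] {μ : Measure Ω} [IsProbabilityMeasure μ]
    {𝒳 : Type*} [MeasurableSpace 𝒳]
    (X : Ω → 𝒳) (Y : Ω → ℕ) (hX : Measurable X) (hY : Measurable Y)
    (hYrange : ∀ ω, Y ω = 0 ∨ Y ω = 1)
    (η : 𝒳 → ℝ) (hη : Measurable η) (hη01 : ∀ x, η x ∈ Set.Icc (0 : ℝ) 1)
    (hreg : μ[(fun ω => if Y ω = 1 then (1 : ℝ) else 0) |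
        MeasurableSpace.comap X inferInstance] =ᵐ[μ] fun ω => η (X ω))
    (hf_half : ∀ x, (1 : ℝ)/2 ≤ max (η x) (1 - η x))
    (C : ℝ) (hC : 0 < C)
    (hdens : ∃ p : ℝ → ENNReal, (∀ t, p t ≤ ENNReal.ofReal C) ∧
      Measure.map (fun ω => max (η (X ω)) (1 - η (X ω))) μ = volume.withDensity p)
    (A : Set 𝒳) (hA : MeasurableSet A)
    (ηhat : 𝒳 → ℝ) (hηhat : Measurable ηhat) (hηhat01 : ∀ x, ηhat x ∈ Set.Icc (0 : ℝ) 1)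
    (ρ : ℝ) (hρ : 0 ≤ ρ) (hclose : ∀ x ∈ A, |ηhat x - η x| ≤ ρ)
    (ghat : 𝒳 → ℕ) (hghat : Measurable ghat)
    (hout : ∀ x ∉ A, ghat x = if η x ≥ 1/2 then 1 else 0)
    (hin : ∀ x ∈ A, ghat x = if ηhat x ≥ 1/2 then 1 else 0) :
    (μ {ω | ghat (X ω) ≠ Y ω}).toReal
        - (μ {ω | (if η (X ω) ≥ 1/2 then (1 : ℕ) else 0) ≠ Y ω}).toReal
      ≤ 4 * C * ρ ^ 2 :=
  excess_risk_bound_of_plugin_on_uncertain_region_general X Y hX hY hYrange η hη hη01 hreg C hC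
    hdens A ηhat ρ hρ hclose ghat hghat hout hin
end
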